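/- arXiv:1708.01231 — 4 statements merged into one kernel-verified Lean document; each statement's English description precedes it below -/
import Mathlib

section
/- Let n and k be positive integers, let E_k := {(i,j) ∈ ℤ² : |j−i| ≥ k+1}, and let h : {0,1,…,n−1} → ℝ be a nonincreasing function. Then for every function u : {1,…,n} → ℤ it holds that H(h,E_k,u) ≥ H(h,E_k,Mu), where Mu is the nondecreasing rearrangement of u. -/
/-!
Induction on `n`. Removing the last entry `u (n + 1)` removes the last column of `H(u)`; if this
entry has `D` enemies, that column is at least `h n + h (n - 1) + ⋯ + h (n + 1 - D)`, since `h` is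
nonincreasing. In the sorted arrangement `Mu` the same value sits at position
`p = #{y | u y ≤ u (n + 1)}`, and deleting it leaves `M_n u`. The enemies of position `p` form an
initial block `[1, L]` and a final block `(c, n + 1]`; closing the gap at `p` brings every pair
straddling `p` one step closer. Telescoping these gains along the rows `x ≤ L` and the columns
`y > c` turns the terms `h (p - x)` and `h (y - p)` of position `p` into exactly the `D` terms
`h n, …, h (n + 1 - D)`, so `H(Mu) ≤ H(M_n u) + h n + ⋯ + h (n + 1 - D)`.
-/

noncomputable section

open Classical in
/-- The total hostility `H(h,E,u)` of the arrangement `u` of `n` dinosaurs (placed at the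
positions `{1,…,n}`) with respect to the enemy list `E` and the hostility function `h`. -/
def Hostility (n : ℕ) (h : ℕ → ℝ) (E : Set (ℤ × ℤ)) (u : ℕ → ℤ) : ℝ :=
  ∑ x ∈ Finset.Icc 1 n, ∑ y ∈ Finset.Icc x n, if (u x, u y) ∈ E then h (y - x) else 0

/-- The nondecreasing rearrangement `Mu` of `u : {1,…,n} → ℤ`:
`Mu(x) = min {j : |{y ∈ {1,…,n} : u y ≤ j}| ≥ x}`. -/
def Mrearr (n : ℕ) (u : ℕ → ℤ) (x : ℕ) : ℤ :=
  sInf {j : ℤ | x ≤ ((Finset.Icc 1 n).filter (fun y => u y ≤ j)).card}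

/-- The enemy list `E_k = {(i,j) ∈ ℤ² : |j - i| ≥ k + 1}`. -/
def enemyList (k : ℕ) : Set (ℤ × ℤ) := {q : ℤ × ℤ | (k : ℤ) + 1 ≤ |q.2 - q.1|}

open Finset

def countLE (n : ℕ) (u : ℕ → ℤ) (j : ℤ) : ℕ := #{y ∈ Icc 1 n | u y ≤ j}

section Counting

variable {n : ℕ} {u : ℕ → ℤ}

lemma countLE_mono : Monotone (countLE n u) := fun _ _ hj =>
  card_le_card fun _ hy => by
    rw [mem_filter] at hy ⊢
    exact ⟨hy.1, hy.2.trans hj⟩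

lemma countLE_le (j : ℤ) : countLE n u j ≤ n := by
  simpa [countLE] using card_filter_le (Icc 1 n) (u · ≤ j)

lemma countLE_succ (j : ℤ) :
    countLE (n + 1) u j = countLE n u j + if u (n + 1) ≤ j then 1 else 0 := by
  rw [countLE, countLE, ← insert_Icc_right_eq_Icc_add_one (Nat.le_add_left 1 n), filter_insert]
  split_ifs with hj
  · exact card_insert_of_notMem (by simp)
  · rfl

lemma countLE_lt_countLE_self {j : ℤ} (hj : j < u (n + 1)) :
    countLE (n + 1) u j < countLE (n + 1) u (u (n + 1)) := by
  rw [countLE_succ, countLE_succ, if_neg hj.not_ge, if_pos le_rfl]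
  exact Nat.lt_succ_of_le (countLE_mono hj.le)

lemma le_iff_le_countLE (hu : MonotoneOn u (Icc 1 n)) {x : ℕ} (hx : x ∈ Icc 1 n) (j : ℤ) :
    u x ≤ j ↔ x ≤ countLE n u j := by
  rw [mem_Icc] at hx
  constructor
  · intro hj
    have hsub : Icc 1 x ⊆ {y ∈ Icc 1 n | u y ≤ j} := fun y hy => by
      rw [mem_Icc] at hy
      have hy' : y ∈ Icc 1 n := mem_Icc.2 ⟨hy.1, hy.2.trans hx.2⟩
      exact mem_filter.2 ⟨hy', (hu hy' (mem_Icc.2 hx) hy.2).trans hj⟩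
    simpa [countLE] using card_le_card hsub
  · intro hc
    by_contra! hj
    have hsub : {y ∈ Icc 1 n | u y ≤ j} ⊆ Ico 1 x := fun y hy => by
      rw [mem_filter, mem_Icc] at hy
      refine mem_Ico.2 ⟨hy.1.1, not_le.1 fun hxy => ?_⟩
      exact (hj.trans_le (hu (mem_Icc.2 hx) (mem_Icc.2 hy.1) hxy)).not_ge hy.2
    have : countLE n u j ≤ x - 1 := by simpa [countLE] using card_le_card hsub
    omega

end Counting

def succAbove (p x : ℕ) : ℕ := if x < p then x else x + 1

lemma succAbove_strictMono (p : ℕ) : StrictMono (succAbove p) := fun x y hxy => by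
  unfold succAbove
  split_ifs <;> omega

lemma image_succAbove_Icc {n p : ℕ} (hp : p ∈ Icc 1 (n + 1)) :
    (Icc 1 n).image (succAbove p) = (Icc 1 (n + 1)).erase p := by
  rw [mem_Icc] at hp
  ext y
  simp only [mem_image, mem_erase, mem_Icc, succAbove]
  constructor
  · rintro ⟨x, hx, rfl⟩
    split_ifs <;> omega
  · intro hy
    refine ⟨if y < p then y else y - 1, ?_, ?_⟩ <;> split_ifs <;> omega

lemma sum_Icc_succ_eq_add_sum_succAbove {M : Type*} [AddCommMonoid M] {n p : ℕ}
    (hp : p ∈ Icc 1 (n + 1)) (f : ℕ → M) :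
    ∑ x ∈ Icc 1 (n + 1), f x = f p + ∑ x ∈ Icc 1 n, f (succAbove p x) := by
  rw [← add_sum_erase _ _ hp, ← image_succAbove_Icc hp,
    sum_image fun x _ y _ hxy => (succAbove_strictMono p).injective hxy]

section Rearrangement

variable {n : ℕ} {u : ℕ → ℤ}

lemma Mrearr_le_iff {x : ℕ} (hx : x ∈ Icc 1 n) (j : ℤ) :
    Mrearr n u x ≤ j ↔ x ≤ countLE n u j := by
  have hne : (Icc 1 n).Nonempty := ⟨x, hx⟩
  have hbdd : BddBelow {j | x ≤ countLE n u j} := by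
    refine ⟨(Icc 1 n).inf' hne u, fun i hi => ?_⟩
    obtain ⟨y, hy⟩ := card_pos.1 (lt_of_lt_of_le (mem_Icc.1 hx).1 hi)
    rw [mem_filter] at hy
    exact (inf'_le u hy.1).trans hy.2
  have hmem : x ≤ countLE n u (Mrearr n u x) := by
    refine Int.csInf_mem ⟨(Icc 1 n).sup' hne u, ?_⟩ hbdd
    rw [Set.mem_ofPred_eq, countLE, filter_true_of_mem fun y hy => le_sup' u hy, Nat.card_Icc,
      Nat.add_sub_cancel]
    exact (mem_Icc.1 hx).2
  exact ⟨fun hj => hmem.trans (countLE_mono hj), fun hj => csInf_le hbdd hj⟩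

lemma Mrearr_monotoneOn : MonotoneOn (Mrearr n u) (Icc 1 n) := fun _ hx _ hy hxy =>
  (Mrearr_le_iff hx _).2 (hxy.trans ((Mrearr_le_iff hy _).1 le_rfl))

lemma countLE_Mrearr (j : ℤ) : countLE n (Mrearr n u) j = countLE n u j := by
  have : {x ∈ Icc 1 n | Mrearr n u x ≤ j} = Icc 1 (countLE n u j) := by
    ext x
    simp only [mem_filter]
    constructor
    · rintro ⟨hx, hj⟩
      exact mem_Icc.2 ⟨(mem_Icc.1 hx).1, (Mrearr_le_iff hx j).1 hj⟩
    · intro hx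
      have hx' : x ∈ Icc 1 n := mem_Icc.2 ⟨(mem_Icc.1 hx).1, (mem_Icc.1 hx).2.trans (countLE_le j)⟩
      exact ⟨hx', (Mrearr_le_iff hx' j).2 (mem_Icc.1 hx).2⟩
  rw [countLE, this, Nat.card_Icc, Nat.add_sub_cancel]

lemma countLE_self_mem_Icc : countLE (n + 1) u (u (n + 1)) ∈ Icc 1 (n + 1) := by
  refine mem_Icc.2 ⟨card_pos.2 ⟨n + 1, ?_⟩, countLE_le _⟩
  simp

lemma Mrearr_countLE_self : Mrearr (n + 1) u (countLE (n + 1) u (u (n + 1))) = u (n + 1) := by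
  refine eq_of_forall_ge_iff fun j => ?_
  rw [Mrearr_le_iff countLE_self_mem_Icc]
  exact ⟨fun hj => not_lt.1 fun hlt => (countLE_lt_countLE_self hlt).not_ge hj,
    fun hj => countLE_mono hj⟩

lemma Mrearr_succAbove {x : ℕ} (hx : x ∈ Icc 1 n) :
    Mrearr (n + 1) u (succAbove (countLE (n + 1) u (u (n + 1))) x) = Mrearr n u x := by
  set p := countLE (n + 1) u (u (n + 1))
  have hsx : succAbove p x ∈ Icc 1 (n + 1) := by
    rw [mem_Icc] at hx ⊢
    unfold succAbove
    split_ifs <;> omega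
  refine eq_of_forall_ge_iff fun j => ?_
  rw [Mrearr_le_iff hsx, Mrearr_le_iff hx]
  by_cases hj : u (n + 1) ≤ j
  · have hpj : p ≤ countLE (n + 1) u j := countLE_mono hj
    rw [countLE_succ, if_pos hj] at hpj ⊢
    unfold succAbove
    split_ifs <;> omega
  · have hpj : countLE (n + 1) u j < p := countLE_lt_countLE_self (not_le.1 hj)
    rw [countLE_succ, if_neg hj] at hpj ⊢
    unfold succAbove
    split_ifs <;> omega

end Rearrangement

lemma sum_Ico_card_le_sum {M : Type*} [AddCommMonoid M] [PartialOrder M] [IsOrderedAddMonoid M]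
    {f : ℕ → M} (hf : Monotone f) {a : ℕ} (s : Finset ℕ) (hs : ∀ x ∈ s, a ≤ x) :
    ∑ i ∈ Ico a (a + #s), f i ≤ ∑ x ∈ s, f x := by
  induction s using Finset.induction_on_max with
  | empty => simp
  | insert m s hlt ih =>
    have hms : m ∉ s := fun hm => (hlt m hm).false
    have hcard : a + #s ≤ m := by
      have : s ⊆ Ico a m := fun x hx =>
        mem_Ico.2 ⟨hs x (mem_insert_of_mem hx), hlt x hx⟩
      have := card_le_card this
      rw [Nat.card_Ico] at this
      have := hs m (mem_insert_self m s)
      omega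
    rw [card_insert_of_notMem hms, ← add_assoc, sum_Ico_succ_top (Nat.le_add_right a _),
      sum_insert hms, add_comm (f m)]
    exact add_le_add (ih fun x hx => hs x (mem_insert_of_mem hx)) (hf hcard)

lemma mem_enemyList {k : ℕ} {a b : ℤ} : (a, b) ∈ enemyList k ↔ b + k < a ∨ a + k < b := by
  simp only [enemyList, Set.mem_ofPred_eq, le_abs]
  omega

lemma not_mem_enemyList_self (k : ℕ) (a : ℤ) : (a, a) ∉ enemyList k := by
  rw [mem_enemyList]
  omega

open Classical in
lemma card_filter_mem_enemyList (N k : ℕ) (v : ℕ → ℤ) (a : ℤ) :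
    #{x ∈ Icc 1 N | (v x, a) ∈ enemyList k} =
      countLE N v (a - k - 1) + (N - countLE N v (a + k)) := by
  have hsplit : {x ∈ Icc 1 N | (v x, a) ∈ enemyList k} =
      {x ∈ Icc 1 N | v x ≤ a - k - 1} ∪ {x ∈ Icc 1 N | ¬ v x ≤ a + k} := by
    rw [← filter_or]
    exact filter_congr fun x _ => by rw [mem_enemyList]; omega
  have hdisj : Disjoint {x ∈ Icc 1 N | v x ≤ a - k - 1} {x ∈ Icc 1 N | ¬ v x ≤ a + k} :=
    disjoint_filter.2 fun x _ hx => by omega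
  have hcompl := card_filter_add_card_filter_not (s := Icc 1 N) (v · ≤ a + k)
  rw [Nat.card_Icc, Nat.add_sub_cancel] at hcompl
  rw [hsplit, card_union_of_disjoint hdisj]
  simp only [countLE]
  omega

lemma Hostility_congr {n : ℕ} {h h' : ℕ → ℝ} {E : Set (ℤ × ℤ)} {u u' : ℕ → ℤ}
    (hh : ∀ d < n, h d = h' d) (hu : ∀ x ∈ Icc 1 n, u x = u' x) :
    Hostility n h E u = Hostility n h' E u' := by
  refine sum_congr rfl fun x hx => sum_congr rfl fun y hy => ?_
  rw [mem_Icc] at hx hy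
  rw [hu x (mem_Icc.2 hx), hu y (mem_Icc.2 ⟨hx.1.trans hy.1, hy.2⟩), hh _ (by omega)]

open Classical in
lemma Hostility_succ {E : Set (ℤ × ℤ)} (hE : ∀ a, (a, a) ∉ E) (n : ℕ) (h : ℕ → ℝ)
    (u : ℕ → ℤ) :
    Hostility (n + 1) h E u =
      Hostility n h E u + ∑ x ∈ Icc 1 n, if (u x, u (n + 1)) ∈ E then h (n + 1 - x) else 0 := by
  have hrow : ∀ x ∈ Icc 1 n, ∑ y ∈ Icc x (n + 1), (if (u x, u y) ∈ E then h (y - x) else 0) =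
      (∑ y ∈ Icc x n, if (u x, u y) ∈ E then h (y - x) else 0) +
        if (u x, u (n + 1)) ∈ E then h (n + 1 - x) else 0 := fun x hx => by
    rw [← insert_Icc_right_eq_Icc_add_one (by rw [mem_Icc] at hx; omega),
      sum_insert (by simp), add_comm]
  rw [Hostility, ← insert_Icc_right_eq_Icc_add_one (Nat.le_add_left 1 n), sum_insert (by simp),
    Icc_self, sum_singleton, if_neg (hE _), zero_add, sum_congr rfl hrow, sum_add_distrib]
  rfl

open Classical in
def pairHostility (h : ℕ → ℝ) (E : Set (ℤ × ℤ)) (v : ℕ → ℤ) (x y : ℕ) : ℝ :=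
  if x ≤ y ∧ (v x, v y) ∈ E then h (y - x) else 0

lemma Hostility_eq_sum_sum_pairHostility (n : ℕ) (h : ℕ → ℝ) (E : Set (ℤ × ℤ)) (v : ℕ → ℤ) :
    Hostility n h E v = ∑ x ∈ Icc 1 n, ∑ y ∈ Icc 1 n, pairHostility h E v x y := by
  refine sum_congr rfl fun x hx => ?_
  have hIcc : Icc x n = {y ∈ Icc 1 n | x ≤ y} := by
    ext y
    simp only [mem_filter, mem_Icc] at hx ⊢
    omega
  rw [hIcc, sum_filter]
  exact sum_congr rfl fun y _ => by rw [pairHostility, ite_and]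

section Deletion

variable {h : ℕ → ℝ} {E : Set (ℤ × ℤ)} {v : ℕ → ℤ} {n p : ℕ}

open Classical in
lemma pairHostility_of_le {x y : ℕ} (hxy : x ≤ y) :
    pairHostility h E v x y = if (v x, v y) ∈ E then h (y - x) else 0 := by
  rw [pairHostility, ite_and, if_pos hxy]

lemma pairHostility_of_lt {x y : ℕ} (hyx : y < x) :
    pairHostility h E v x y = 0 :=
  if_neg fun hc => hyx.not_ge hc.1

lemma Hostility_succ_eq (hp : p ∈ Icc 1 (n + 1)) (hE : (v p, v p) ∉ E) :
    Hostility (n + 1) h E v =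
      Hostility n h E (v ∘ succAbove p) + ∑ x ∈ Icc 1 n, pairHostility h E v (succAbove p x) p +
        ∑ y ∈ Icc 1 n, pairHostility h E v p (succAbove p y) -
        ∑ x ∈ Icc 1 n, ∑ y ∈ Icc 1 n, (pairHostility h E (v ∘ succAbove p) x y -
          pairHostility h E v (succAbove p x) (succAbove p y)) := by
  have hpp : pairHostility h E v p p = 0 := if_neg fun hc => hE hc.2
  simp only [Hostility_eq_sum_sum_pairHostility, sum_Icc_succ_eq_add_sum_succAbove hp,
    sum_add_distrib, sum_sub_distrib, hpp]
  ring

lemma pairHostility_succAbove_sub_nonneg (hh : Antitone h) (x y : ℕ) :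
    0 ≤ pairHostility h E (v ∘ succAbove p) x y -
      pairHostility h E v (succAbove p x) (succAbove p y) := by
  have hle : succAbove p x ≤ succAbove p y ↔ x ≤ y := (succAbove_strictMono p).le_iff_le
  simp only [pairHostility, Function.comp_apply]
  split_ifs with h₁ h₂ h₂
  · exact sub_nonneg.2 (hh (by unfold succAbove; split_ifs <;> omega))
  · exact absurd ⟨hle.2 h₁.1, h₁.2⟩ h₂
  · exact absurd ⟨hle.1 h₂.1, h₂.2⟩ h₁
  · rw [sub_self]

lemma pairHostility_succAbove_sub_of_lt_of_le {x y : ℕ} (hx : x < p) (hy : p ≤ y)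
    (hE : (v x, v (y + 1)) ∈ E) :
    pairHostility h E (v ∘ succAbove p) x y -
      pairHostility h E v (succAbove p x) (succAbove p y) = h (y - x) - h (y + 1 - x) := by
  have hsx : succAbove p x = x := if_pos hx
  have hsy : succAbove p y = y + 1 := if_neg hy.not_gt
  have h₁ : x ≤ y ∧ ((v ∘ succAbove p) x, (v ∘ succAbove p) y) ∈ E := by
    rw [Function.comp_apply, Function.comp_apply, hsx, hsy]
    exact ⟨by omega, hE⟩
  have h₂ : succAbove p x ≤ succAbove p y ∧ (v (succAbove p x), v (succAbove p y)) ∈ E := by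
    rw [hsx, hsy]
    exact ⟨by omega, hE⟩
  rw [pairHostility, pairHostility, if_pos h₁, if_pos h₂, hsx, hsy]

end Deletion

section Sorted

variable {k : ℕ} {h : ℕ → ℝ} {v : ℕ → ℤ} {n p L c : ℕ}

lemma sum_pairHostility_succAbove_left (hv : MonotoneOn v (Icc 1 (n + 1)))
    (hp : p ∈ Icc 1 (n + 1)) (hL : ∀ x ∈ Icc 1 (n + 1), v x ≤ v p - k - 1 ↔ x ≤ L) :
    ∑ x ∈ Icc 1 n, pairHostility h (enemyList k) v (succAbove p x) p =
      ∑ x ∈ Ico 1 (L + 1), h (p - x) := by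
  have hLp : L < p := not_le.1 fun hle => by have := (hL p hp).2 hle; omega
  have hpt : ∀ x ∈ Icc 1 n, pairHostility h (enemyList k) v (succAbove p x) p =
      if x ≤ L then h (p - x) else 0 := fun x hx => by
    have hx' : x ∈ Icc 1 (n + 1) := by rw [mem_Icc] at hx ⊢; omega
    by_cases hxp : x < p
    · have hvx : v x ≤ v p := hv hx' hp hxp.le
      have hiff : (v x, v p) ∈ enemyList k ↔ x ≤ L := by
        rw [mem_enemyList, ← hL x hx']
        omega
      rw [show succAbove p x = x from if_pos hxp, pairHostility_of_le hxp.le]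
      classical exact if_congr hiff rfl rfl
    · rw [show succAbove p x = x + 1 from if_neg hxp, pairHostility_of_lt (by omega),
        if_neg (by omega)]
  rw [sum_congr rfl hpt, ← sum_filter]
  congr 1
  ext x
  simp only [mem_filter, mem_Icc, mem_Ico] at hp ⊢
  omega

lemma sum_pairHostility_succAbove_right (hv : MonotoneOn v (Icc 1 (n + 1)))
    (hp : p ∈ Icc 1 (n + 1)) (hc : ∀ y ∈ Icc 1 (n + 1), v y ≤ v p + k ↔ y ≤ c) :
    ∑ y ∈ Icc 1 n, pairHostility h (enemyList k) v p (succAbove p y) =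
      ∑ y ∈ Ico c (n + 1), h (y + 1 - p) := by
  have hpc : p ≤ c := (hc p hp).1 (by omega)
  have hpt : ∀ y ∈ Icc 1 n, pairHostility h (enemyList k) v p (succAbove p y) =
      if c ≤ y then h (y + 1 - p) else 0 := fun y hy => by
    have hy' : y + 1 ∈ Icc 1 (n + 1) := by rw [mem_Icc] at hy ⊢; omega
    by_cases hyp : y < p
    · rw [show succAbove p y = y from if_pos hyp, pairHostility_of_lt hyp, if_neg (by omega)]
    · have hvy : v p ≤ v (y + 1) := hv hp hy' (by omega)
      have hiff : (v p, v (y + 1)) ∈ enemyList k ↔ c ≤ y := by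
        rw [mem_enemyList, show c ≤ y ↔ ¬ y + 1 ≤ c by omega, ← hc (y + 1) hy']
        omega
      rw [show succAbove p y = y + 1 from if_neg hyp, pairHostility_of_le (by omega)]
      classical exact if_congr hiff rfl rfl
  rw [sum_congr rfl hpt, ← sum_filter]
  congr 1
  ext y
  simp only [mem_filter, mem_Icc, mem_Ico] at hp ⊢
  omega

lemma sum_Ico_sum_Ico_le_sum_pairHostility_succAbove_sub (hh : Antitone h)
    (hv : MonotoneOn v (Icc 1 (n + 1))) (hp : p ∈ Icc 1 (n + 1))
    (hL : ∀ x ∈ Icc 1 (n + 1), v x ≤ v p - k - 1 ↔ x ≤ L)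
    (hc : ∀ y ∈ Icc 1 (n + 1), v y ≤ v p + k ↔ y ≤ c) :
    ∑ x ∈ Ico 1 (L + 1), ∑ y ∈ Ico p (n + 1), (h (y - x) - h (y + 1 - x)) +
        ∑ x ∈ Ico (L + 1) p, ∑ y ∈ Ico c (n + 1), (h (y - x) - h (y + 1 - x)) ≤
      ∑ x ∈ Icc 1 n, ∑ y ∈ Icc 1 n, (pairHostility h (enemyList k) (v ∘ succAbove p) x y -
        pairHostility h (enemyList k) v (succAbove p x) (succAbove p y)) := by
  have hLp : L < p := not_le.1 fun hle => by have := (hL p hp).2 hle; omega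
  have hpc : p ≤ c := (hc p hp).1 (by omega)
  rw [mem_Icc] at hp
  have hR₁ : ∀ x ∈ Ico 1 (L + 1), ∀ y ∈ Ico p (n + 1), h (y - x) - h (y + 1 - x) =
      pairHostility h (enemyList k) (v ∘ succAbove p) x y -
        pairHostility h (enemyList k) v (succAbove p x) (succAbove p y) := fun x hx y hy => by
    rw [mem_Ico] at hx hy
    have hvx : v x ≤ v p - k - 1 := (hL x (mem_Icc.2 ⟨hx.1, by omega⟩)).2 (by omega)
    have hvy : v p ≤ v (y + 1) := hv (mem_Icc.2 hp) (mem_Icc.2 ⟨by omega, by omega⟩) (by omega)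
    exact (pairHostility_succAbove_sub_of_lt_of_le (by omega) hy.1
      (mem_enemyList.2 (Or.inr (by omega)))).symm
  have hR₂ : ∀ x ∈ Ico (L + 1) p, ∀ y ∈ Ico c (n + 1), h (y - x) - h (y + 1 - x) =
      pairHostility h (enemyList k) (v ∘ succAbove p) x y -
        pairHostility h (enemyList k) v (succAbove p x) (succAbove p y) := fun x hx y hy => by
    rw [mem_Ico] at hx hy
    have hvx : v x ≤ v p := hv (mem_Icc.2 ⟨by omega, by omega⟩) (mem_Icc.2 hp) hx.2.le
    have hvy : ¬ v (y + 1) ≤ v p + k := fun hle =>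
      absurd ((hc (y + 1) (mem_Icc.2 ⟨by omega, by omega⟩)).1 hle) (by omega)
    exact (pairHostility_succAbove_sub_of_lt_of_le hx.2 (by omega)
      (mem_enemyList.2 (Or.inr (by omega)))).symm
  rw [sum_congr rfl fun x hx => sum_congr rfl (hR₁ x hx),
    sum_congr rfl fun x hx => sum_congr rfl (hR₂ x hx), ← sum_product', ← sum_product',
    ← sum_product', ← sum_union (disjoint_product.2 (Or.inl (Ico_disjoint_Ico_consecutive ..)))]
  refine sum_le_sum_of_subset_of_nonneg (union_subset ?_ ?_) fun q _ _ =>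
    pairHostility_succAbove_sub_nonneg hh q.1 q.2 <;>
  · intro q hq
    simp only [mem_product, mem_Ico, mem_Icc] at hq ⊢
    omega

end Sorted

lemma sum_Ico_add_sum_Ico_eq_sum_Ico (f : ℕ → ℝ) {N L c : ℕ} (hcN : c ≤ N) :
    ∑ x ∈ Ico 1 (L + 1), f (N - x) + ∑ y ∈ Ico c N, f (y - L) =
      ∑ i ∈ Ico 1 (1 + (L + (N - c))), f (N - i) := by
  rw [← sum_Ico_consecutive _ (Nat.le_add_left 1 L) (by omega : L + 1 ≤ 1 + (L + (N - c)))]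
  congr 1
  have := sum_Ico_reflect (fun y => f (y - L)) (L + 1) (n := N + L) (m := 1 + (L + (N - c)))
    (by omega)
  rw [show N + L + 1 - (1 + (L + (N - c))) = c by omega, show N + L + 1 - (L + 1) = N by omega]
    at this
  rw [← this]
  exact sum_congr rfl fun i _ => congrArg f (by omega)

open Classical in
theorem Hostility_succ_le {k : ℕ} {h : ℕ → ℝ} {v : ℕ → ℤ} {n p : ℕ} (hh : Antitone h)
    (hv : MonotoneOn v (Icc 1 (n + 1))) (hp : p ∈ Icc 1 (n + 1)) :
    Hostility (n + 1) h (enemyList k) v ≤ Hostility n h (enemyList k) (v ∘ succAbove p) +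
      ∑ i ∈ Ico 1 (1 + #{x ∈ Icc 1 (n + 1) | (v x, v p) ∈ enemyList k}), h (n + 1 - i) := by
  set L := countLE (n + 1) v (v p - k - 1)
  set c := countLE (n + 1) v (v p + k)
  have hL : ∀ x ∈ Icc 1 (n + 1), v x ≤ v p - k - 1 ↔ x ≤ L := fun x hx =>
    le_iff_le_countLE hv hx _
  have hc : ∀ y ∈ Icc 1 (n + 1), v y ≤ v p + k ↔ y ≤ c := fun y hy => le_iff_le_countLE hv hy _
  have hLp : L < p := not_le.1 fun hle => by have := (hL p hp).2 hle; omega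
  have hcol : ∀ x ∈ Ico 1 (L + 1),
      h (p - x) - ∑ y ∈ Ico p (n + 1), (h (y - x) - h (y + 1 - x)) = h (n + 1 - x) :=
    fun x _ => by
      have := sum_Ico_sub (fun y => h (y - x)) (mem_Icc.1 hp).2
      simp only [sum_sub_distrib] at this ⊢
      linarith
  have hrow : ∀ y ∈ Ico c (n + 1),
      h (y + 1 - p) - ∑ x ∈ Ico (L + 1) p, (h (y - x) - h (y + 1 - x)) = h (y - L) :=
    fun y _ => by
      have := sum_Ico_sub (fun x => h (y + 1 - x)) (show L + 1 ≤ p from hLp)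
      simp only [Nat.add_sub_add_right, sum_sub_distrib] at this ⊢
      linarith
  have hstretch := sum_Ico_sum_Ico_le_sum_pairHostility_succAbove_sub hh hv hp hL hc
  rw [card_filter_mem_enemyList, Hostility_succ_eq hp (not_mem_enemyList_self k _),
    sum_pairHostility_succAbove_left hv hp hL, sum_pairHostility_succAbove_right hv hp hc,
    ← sum_Ico_add_sum_Ico_eq_sum_Ico h (countLE_le _), ← sum_congr rfl hcol,
    ← sum_congr rfl hrow, sum_sub_distrib, sum_sub_distrib, sum_comm (s := Ico c (n + 1))]
  linarith

open Classical in
theorem Hostility_Mrearr_le {h : ℕ → ℝ} (hh : Antitone h) (k : ℕ) :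
    ∀ n u, Hostility n h (enemyList k) (Mrearr n u) ≤ Hostility n h (enemyList k) u
  | 0, _ => by simp [Hostility]
  | n + 1, u => by
    set p := countLE (n + 1) u (u (n + 1))
    have hdel : Hostility n h (enemyList k) (Mrearr (n + 1) u ∘ succAbove p) =
        Hostility n h (enemyList k) (Mrearr n u) :=
      Hostility_congr (fun _ _ => rfl) fun _ hx => Mrearr_succAbove hx
    have hcard : #{x ∈ Icc 1 (n + 1) | (Mrearr (n + 1) u x, Mrearr (n + 1) u p) ∈ enemyList k} =
        #{x ∈ Icc 1 n | (u x, u (n + 1)) ∈ enemyList k} := by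
      rw [Mrearr_countLE_self, card_filter_mem_enemyList, countLE_Mrearr, countLE_Mrearr,
        ← card_filter_mem_enemyList, ← insert_Icc_right_eq_Icc_add_one (Nat.le_add_left 1 n),
        filter_insert, if_neg (not_mem_enemyList_self k _)]
    have hlast : ∑ i ∈ Ico 1 (1 + #{x ∈ Icc 1 n | (u x, u (n + 1)) ∈ enemyList k}),
        h (n + 1 - i) ≤
          ∑ x ∈ Icc 1 n, if (u x, u (n + 1)) ∈ enemyList k then h (n + 1 - x) else 0 := by
      rw [← sum_filter]
      exact sum_Ico_card_le_sum (fun a b hab => hh (Nat.sub_le_sub_left hab _)) _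
        fun x hx => (mem_Icc.1 (mem_filter.1 hx).1).1
    calc Hostility (n + 1) h (enemyList k) (Mrearr (n + 1) u)
        ≤ Hostility n h (enemyList k) (Mrearr (n + 1) u ∘ succAbove p) +
          ∑ i ∈ Ico 1 (1 + #{x ∈ Icc 1 (n + 1) |
            (Mrearr (n + 1) u x, Mrearr (n + 1) u p) ∈ enemyList k}), h (n + 1 - i) :=
          Hostility_succ_le hh Mrearr_monotoneOn countLE_self_mem_Icc
      _ ≤ Hostility n h (enemyList k) u +
          ∑ x ∈ Icc 1 n, if (u x, u (n + 1)) ∈ enemyList k then h (n + 1 - x) else 0 := by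
          rw [hdel, hcard]
          exact add_le_add (Hostility_Mrearr_le hh k n u) hlast
      _ = Hostility (n + 1) h (enemyList k) u :=
          (Hostility_succ (not_mem_enemyList_self k) n h u).symm

theorem hostility_minimization_discrete_general (n k : ℕ)
    (h : ℕ → ℝ) (hmono : ∀ i j, i ≤ j → j ≤ n - 1 → h j ≤ h i)
    (u : ℕ → ℤ) :
    Hostility n h (enemyList k) (Mrearr n u) ≤ Hostility n h (enemyList k) u := by
  have htrunc : ∀ v, Hostility n h (enemyList k) v =
      Hostility n (fun d => h (min d (n - 1))) (enemyList k) v := fun v =>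
    Hostility_congr (fun d hd => by rw [min_eq_left (by omega)]) fun _ _ => rfl
  rw [htrunc, htrunc]
  exact Hostility_Mrearr_le
    (fun a b hab => hmono _ _ (min_le_min_right _ hab) (min_le_right _ _)) k n u

/-- **Total hostility minimization, discrete setting** (Theorem 2.2): the nondecreasing
rearrangement minimizes the total hostility with respect to the enemy list `E_k`. -/
theorem hostility_minimization_discrete (n k : ℕ) (hn : 0 < n) (hk : 0 < k)
    (h : ℕ → ℝ) (hmono : ∀ i j, i ≤ j → j ≤ n - 1 → h j ≤ h i)
    (u : ℕ → ℤ) :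
    Hostility n h (enemyList k) (Mrearr n u) ≤ Hostility n h (enemyList k) u :=
  hostility_minimization_discrete_general n k h hmono u
end
end

section
/- Let L and R be finite sets of positive integers, and let h : ℕ → ℝ be a nonincreasing function. Define the left-right gap G(L,R) := h(0) + Σ_{ℓ∈L} h(ℓ) + Σ_{r∈R} h(r) − Σ_{(ℓ,r)∈L×R} (h(ℓ+r−1) − h(ℓ+r)). Then G(L,R) ≤ Σ_{i=0}^{|L|+|R|} h(i), where |L| and |R| denote the number of elements of L and R. -/
/-!
Moving the subtracted pair terms across, the inequality compares the sums of `h` over two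
multisets of the same size `1 + |L| + |R| + |L||R|`: `{0} + L + R + {ℓ + r}` on the left and
`{0, …, |L| + |R|} + {ℓ + r - 1}` on the right. By Abel summation, for nonincreasing `h` the sum
over a multiset only grows when, for every `k`, more of its elements are `≤ k`. That count
comparison reduces to `#{ℓ ≤ k} + #{r ≤ k} ≤ k + #{(ℓ, r) | ℓ + r = k + 1}`, because the
elements `ℓ ≤ k` and the reflections `k + 1 - r` of the `r ≤ k` all lie in `[1, k]`, and they
coincide exactly along such pairs.
-/

open Finset

section LayerCake

variable {β : Type*} [AddCommGroup β]

lemma eq_add_sum_range_ite_sub (h : ℕ → β) {a N : ℕ} (ha : a ≤ N) :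
    h a = h N + ∑ k ∈ range N, if a ≤ k then h k - h (k + 1) else 0 := by
  have hIco : (range N).filter (a ≤ ·) = Ico a N := by ext; simp; omega
  rw [← sum_filter, hIco, sum_congr rfl fun k _ => (neg_sub (h (k + 1)) (h k)).symm,
    sum_neg_distrib, sum_Ico_sub h ha]
  abel

theorem Multiset.sum_map_eq_card_nsmul_add_sum_range (h : ℕ → β) {u : Multiset ℕ} {N : ℕ}
    (hu : ∀ x ∈ u, x ≤ N) :
    (u.map h).sum = card u • h N +
      ∑ k ∈ Finset.range N, card (u.filter (· ≤ k)) • (h k - h (k + 1)) := by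
  induction u using Multiset.induction_on with
  | empty => simp
  | cons a u ih =>
    rw [Multiset.map_cons, Multiset.sum_cons, ih fun x hx => hu x (Multiset.mem_cons_of_mem hx),
      eq_add_sum_range_ite_sub h (hu a (Multiset.mem_cons_self a u))]
    simp only [Multiset.filter_cons, Multiset.card_add, Multiset.card_cons, add_smul,
      sum_add_distrib, apply_ite Multiset.card, Multiset.card_singleton, Multiset.card_zero,
      ite_smul, one_smul, zero_smul]
    abel

theorem Multiset.sum_map_le_sum_map_of_card_filter_le [PartialOrder β] [IsOrderedAddMonoid β]
    {h : ℕ → β} (hh : Antitone h) {s t : Multiset ℕ} (hcard : card s = card t)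
    (hcount : ∀ k, card (s.filter (· ≤ k)) ≤ card (t.filter (· ≤ k))) :
    (s.map h).sum ≤ (t.map h).sum := by
  have hN : ∀ x ∈ s + t, x ≤ (s + t).sup := fun x hx => Multiset.le_sup hx
  rw [sum_map_eq_card_nsmul_add_sum_range h fun x hx => hN x (mem_add.2 (.inl hx)),
    sum_map_eq_card_nsmul_add_sum_range h fun x hx => hN x (mem_add.2 (.inr hx)), hcard]
  exact add_le_add le_rfl
    (sum_le_sum fun k _ => nsmul_le_nsmul_left (sub_nonneg.2 (hh k.le_succ)) (hcount k))

end LayerCake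

lemma Finset.card_filter_le_succ {ι : Type*} (s : Finset ι) (f : ι → ℕ) (k : ℕ) :
    #{x ∈ s | f x ≤ k + 1} = #{x ∈ s | f x ≤ k} + #{x ∈ s | f x = k + 1} := by
  classical
  rw [← card_union_of_disjoint (disjoint_filter.2 fun x _ hle heq => by omega), ← filter_or]
  exact congrArg card (filter_congr fun x _ => by omega)

lemma card_le_add_card_le_le_add_card_sum_eq {L R : Finset ℕ} (hL : ∀ ℓ ∈ L, 0 < ℓ)
    (hR : ∀ r ∈ R, 0 < r) (k : ℕ) :
    #{ℓ ∈ L | ℓ ≤ k} + #{r ∈ R | r ≤ k} ≤ k + #{p ∈ L ×ˢ R | p.1 + p.2 = k + 1} := by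
  set A := L.filter (· ≤ k)
  set B := (R.filter (· ≤ k)).image (k + 1 - ·)
  have hB : #B = #{r ∈ R | r ≤ k} := card_image_of_injOn fun r₁ hr₁ r₂ hr₂ heq => by
    simp only [coe_filter, Set.mem_ofPred_eq] at hr₁ hr₂ heq
    omega
  have hunion : #(A ∪ B) ≤ k := by
    refine (card_le_card fun x hx => ?_).trans (Nat.card_Icc 1 k).le
    rcases mem_union.1 hx with hx | hx
    · obtain ⟨hxL, hxk⟩ := mem_filter.1 hx
      exact mem_Icc.2 ⟨hL x hxL, hxk⟩
    · obtain ⟨r, hr, rfl⟩ := mem_image.1 hx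
      obtain ⟨hrR, hrk⟩ := mem_filter.1 hr
      have := hR r hrR
      exact mem_Icc.2 (by omega)
  have hinter : #(A ∩ B) ≤ #{p ∈ L ×ˢ R | p.1 + p.2 = k + 1} := by
    refine card_le_card_of_injOn (fun x => (x, k + 1 - x)) (fun x hx => ?_)
      fun x₁ _ x₂ _ heq => congrArg Prod.fst heq
    obtain ⟨hxA, hxB⟩ := mem_inter.1 hx
    obtain ⟨hxL, hxk⟩ := mem_filter.1 hxA
    obtain ⟨r, hr, rfl⟩ := mem_image.1 hxB
    obtain ⟨hrR, hrk⟩ := mem_filter.1 hr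
    have := hR r hrR
    simp only [coe_filter, mem_product, Set.mem_ofPred_eq]
    refine ⟨⟨hxL, ?_⟩, by omega⟩
    rwa [show k + 1 - (k + 1 - r) = r by omega]
  have := card_union_add_card_inter A B
  omega

lemma leftRightGap_card_filter_le {L R : Finset ℕ} (hL : ∀ ℓ ∈ L, 0 < ℓ) (hR : ∀ r ∈ R, 0 < r)
    (k : ℕ) :
    1 + #{ℓ ∈ L | ℓ ≤ k} + #{r ∈ R | r ≤ k} + #{p ∈ L ×ˢ R | p.1 + p.2 ≤ k}
      ≤ #{i ∈ range (#L + #R + 1) | i ≤ k} + #{p ∈ L ×ˢ R | p.1 + p.2 - 1 ≤ k} := by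
  have hrange : (range (#L + #R + 1)).filter (· ≤ k) = range (min (k + 1) (#L + #R + 1)) := by
    ext; simp; omega
  have hpairs := card_filter_le_succ (L ×ˢ R) (fun p => p.1 + p.2) k
  simp only [← Nat.sub_le_iff_le_add] at hpairs
  have := card_le_add_card_le_le_add_card_sum_eq hL hR k
  have := card_filter_le L (· ≤ k)
  have := card_filter_le R (· ≤ k)
  rw [hrange, card_range, hpairs]
  omega

/-- **Left-right gap inequality** (inequality (2.4)): for finite sets `L`, `R` of positive
integers and a nonincreasing `h : ℕ → ℝ`,
`G(L,R) = h 0 + Σ_{ℓ∈L} h ℓ + Σ_{r∈R} h r − Σ_{(ℓ,r)∈L×R} (h (ℓ+r−1) − h (ℓ+r))`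
is at most `Σ_{i=0}^{|L|+|R|} h i`. -/
theorem leftRightGap_le (L R : Finset ℕ) (hL : ∀ ℓ ∈ L, 0 < ℓ) (hR : ∀ r ∈ R, 0 < r)
    (h : ℕ → ℝ) (hmono : ∀ i j : ℕ, i ≤ j → h j ≤ h i) :
    h 0 + (∑ ℓ ∈ L, h ℓ) + (∑ r ∈ R, h r)
        - ∑ ℓ ∈ L, ∑ r ∈ R, (h (ℓ + r - 1) - h (ℓ + r))
      ≤ ∑ i ∈ Finset.range (L.card + R.card + 1), h i := by
  have key := Multiset.sum_map_le_sum_map_of_card_filter_le (fun i j hij => hmono i j hij)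
    (s := 0 ::ₘ L.val + R.val + (L ×ˢ R).val.map (fun p => p.1 + p.2))
    (t := (range (#L + #R + 1)).val + (L ×ˢ R).val.map (fun p => p.1 + p.2 - 1))
    (by simp) fun k => by
      simp only [Multiset.filter_cons, Multiset.filter_add, Multiset.card_add,
        Multiset.filter_map, Multiset.card_map, ← filter_val, card_val, zero_le, if_true,
        Multiset.card_singleton, Function.comp_def]
      exact leftRightGap_card_filter_le hL hR k
  simp only [Multiset.map_cons, Multiset.map_add, Multiset.map_map, Multiset.sum_cons,
    Multiset.sum_add, ← sum_eq_multiset_sum, Function.comp_def, sum_product] at key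
  simp only [sum_sub_distrib]
  linarith
end

section
/- Let δ > 0 and p ≥ 1 be real numbers, and let u : ℝ → ℝ be a δ-step function. Then there exists a family {u_ε}_{ε>0} of functions of class C^∞ with compact support on ℝ such that u_ε → u in L^p(ℝ) as ε → 0⁺ and lim_{ε→0⁺} Λ_{δ,p}(u_ε,ℝ) = Λ_{δ,p}(u,ℝ). -/
open MeasureTheory Filter Topology Set
open scoped ENNReal NNReal

noncomputable section

/-- The one-dimensional non-local functional `Λ_{δ,p}(u,Ω)`. -/
def Lambda1 (p δ : ℝ) (u : ℝ → ℝ) (Ω : Set ℝ) : ℝ≥0∞ :=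
  ∫⁻ q in {q : ℝ × ℝ | q.1 ∈ Ω ∧ q.2 ∈ Ω ∧ δ < |u q.2 - u q.1|},
    ENNReal.ofReal (δ ^ p / |q.2 - q.1| ^ (1 + p))

/-- The constant `C_p`. -/
def Cp (p : ℝ) : ℝ := if p = 1 then Real.log 2 else (1 / (p - 1)) * (1 - 1 / (2 : ℝ) ^ (p - 1))

/-- `u` is a `δ`-step function: there are points `x_0 < x_1 < … < x_n` and integers
`k_1, …, k_n` such that `u = 0` outside `(x_0, x_n)`, `u = k_i·δ` on `(x_{i−1}, x_i)`,
`|k_1| = |k_n| = 1`, and `|k_i − k_{i−1}| = 1` for `i = 2,…,n`. -/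
def IsDeltaStep (δ : ℝ) (u : ℝ → ℝ) : Prop :=
  ∃ (n : ℕ) (x : ℕ → ℝ) (kk : ℕ → ℤ),
    0 < n ∧
    (∀ i, i < n → x i < x (i + 1)) ∧
    (∀ y, y < x 0 → u y = 0) ∧
    (∀ y, x n < y → u y = 0) ∧
    (∀ i, 1 ≤ i → i ≤ n → ∀ y, x (i - 1) < y → y < x i → u y = (kk i : ℝ) * δ) ∧
    |kk 1| = 1 ∧ |kk n| = 1 ∧
    (∀ i, 2 ≤ i → i ≤ n → |kk i - kk (i - 1)| = 1)

/-!
Away from its finitely many nodes, a `δ`-step function is `∑ⱼ (v (j + 1) - v j) H(z - X j)`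
with `H` the Heaviside function and jumps `|v (j + 1) - v j| ≤ δ`; replacing `H` by
`t ↦ smoothTransition (t / ε)` gives `u_ε`. The two functions agree outside the zone
`⋃ⱼ (X j, X j + ε)` of measure `O(ε)` and differ by at most `(n + 1) δ` on it, which gives the
`L^p` convergence. If the nodes are `g`-separated and `ε < g / 2`, at most one jump is active
between two points at distance `< g / 2`, so neither function has an increment `> δ` at such
distances. Hence `I(δ, u, ℝ)` and `I(δ, u_ε, ℝ)` differ only by pairs at distance `≥ g / 2` with
an endpoint in the zone, whose weight is at most `2 |zone| ∫_{|t| ≥ g/2} δ^p |t|^(-1-p) dt`.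
-/

def heaviside : ℝ → ℝ := (Ioi 0).indicator 1

structure IsTransition (ψ : ℝ → ℝ) (ε : ℝ) : Prop where
  nonneg : ∀ t, 0 ≤ ψ t
  le_one : ∀ t, ψ t ≤ 1
  eq_zero_of_nonpos : ∀ t ≤ 0, ψ t = 0
  eq_one_of_le : ∀ t, ε ≤ t → ψ t = 1

namespace IsTransition

variable {ψ₁ ψ₂ : ℝ → ℝ} {ε ε₁ ε₂ : ℝ}

theorem abs_sub_le_one (h₁ : IsTransition ψ₁ ε₁) (h₂ : IsTransition ψ₂ ε₂) (s t : ℝ) :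
    |ψ₁ s - ψ₂ t| ≤ 1 :=
  abs_sub_le_iff.2
    ⟨by linarith [h₁.le_one s, h₂.nonneg t], by linarith [h₁.nonneg s, h₂.le_one t]⟩

theorem eq_of_notMem_Ioo (h₁ : IsTransition ψ₁ ε) (h₂ : IsTransition ψ₂ ε) {t : ℝ}
    (ht : t ∉ Ioo 0 ε) : ψ₁ t = ψ₂ t := by
  rcases le_or_gt t 0 with h | h
  · rw [h₁.eq_zero_of_nonpos t h, h₂.eq_zero_of_nonpos t h]
  · have hεt : ε ≤ t := not_lt.1 fun h' => ht ⟨h, h'⟩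
    rw [h₁.eq_one_of_le t hεt, h₂.eq_one_of_le t hεt]

theorem sub_eq_zero_of_le {ψ : ℝ → ℝ} (hψ : IsTransition ψ ε) {s t : ℝ} (hst : s ≤ t)
    (h : t ≤ 0 ∨ ε ≤ s) : ψ t - ψ s = 0 := by
  rcases h with h | h
  · rw [hψ.eq_zero_of_nonpos t h, hψ.eq_zero_of_nonpos s (hst.trans h), sub_self]
  · rw [hψ.eq_one_of_le t (h.trans hst), hψ.eq_one_of_le s h, sub_self]

end IsTransition

theorem isTransition_heaviside {ε : ℝ} (hε : 0 < ε) : IsTransition heaviside ε where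
  nonneg _ := indicator_nonneg (fun _ _ => zero_le_one) _
  le_one _ := indicator_le_self' (fun _ _ => zero_le_one) _
  eq_zero_of_nonpos _ ht := indicator_of_notMem (not_lt.2 ht) _
  eq_one_of_le _ ht := indicator_of_mem (mem_Ioi.2 (hε.trans_le ht)) _

theorem isTransition_smoothTransition {ε : ℝ} (hε : 0 < ε) :
    IsTransition (fun t => Real.smoothTransition (t / ε)) ε where
  nonneg _ := Real.smoothTransition.nonneg _
  le_one _ := Real.smoothTransition.le_one _
  eq_zero_of_nonpos _ ht :=
    Real.smoothTransition.zero_of_nonpos (div_nonpos_of_nonpos_of_nonneg ht hε.le)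
  eq_one_of_le _ ht := Real.smoothTransition.one_of_one_le ((one_le_div hε).2 ht)

/-- With `ψ = heaviside` this is the step function equal to `v i - v 0` on `(X (i - 1), X i)`;
any other transition profile `ψ` smooths each jump `v (j + 1) - v j` over `[X j, X j + ε]`. -/
def stepSum (ψ : ℝ → ℝ) (n : ℕ) (X v : ℕ → ℝ) (z : ℝ) : ℝ :=
  ∑ j ∈ Finset.range (n + 1), (v (j + 1) - v j) * ψ (z - X j)

def transitionZone (n : ℕ) (X : ℕ → ℝ) (ε : ℝ) : Set ℝ :=
  ⋃ j ∈ Finset.range (n + 1), Ioo (X j) (X j + ε)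

section StepSum

variable {ψ ψ₁ ψ₂ : ℝ → ℝ} {n : ℕ} {X v : ℕ → ℝ} {ε δ g z : ℝ}

theorem stepSum_eq_sub {i : ℕ} (hi : i ≤ n + 1) (h₁ : ∀ j < i, ψ (z - X j) = 1)
    (h₀ : ∀ j, i ≤ j → j ≤ n → ψ (z - X j) = 0) : stepSum ψ n X v z = v i - v 0 := by
  rw [stepSum, ← Finset.sum_range_add_sum_Ico _ hi, ← Finset.sum_range_sub,
    Finset.sum_eq_zero (s := Finset.Ico i (n + 1)) fun j hj => ?_, add_zero]
  · exact Finset.sum_congr rfl fun j hj => by rw [h₁ j (Finset.mem_range.1 hj), mul_one]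
  · rw [Finset.mem_Ico] at hj
    rw [h₀ j hj.1 (Nat.lt_succ_iff.1 hj.2), mul_zero]

theorem stepSum_eq_zero_of_notMem_Icc (hψ : IsTransition ψ ε) (hX : MonotoneOn X (Iic n))
    (hv0 : v 0 = 0) (hvn : v (n + 1) = 0) (hz : z ∉ Icc (X 0) (X n + ε)) :
    stepSum ψ n X v z = 0 := by
  have hXj : ∀ j ≤ n, X 0 ≤ X j ∧ X j ≤ X n := fun j hj =>
    ⟨hX (Nat.zero_le n) hj (Nat.zero_le j), hX hj (le_refl n) hj⟩
  rcases not_and_or.1 hz with h | h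
  · rw [stepSum_eq_sub (Nat.zero_le _) (fun j hj => absurd hj (Nat.not_lt_zero j))
      fun j _ hj => hψ.eq_zero_of_nonpos _ (by linarith [(hXj j hj).1, not_le.1 h]),
      hv0, sub_self]
  · rw [stepSum_eq_sub le_rfl (fun j hj => hψ.eq_one_of_le _ ?_) (fun j h₁ h₂ => by omega),
      hvn, hv0, sub_self]
    linarith [(hXj j (Nat.lt_succ_iff.1 hj)).2, not_le.1 h]

theorem hasCompactSupport_stepSum (hψ : IsTransition ψ ε) (hX : MonotoneOn X (Iic n))
    (hv0 : v 0 = 0) (hvn : v (n + 1) = 0) : HasCompactSupport (stepSum ψ n X v) :=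
  HasCompactSupport.intro isCompact_Icc fun _ hz =>
    stepSum_eq_zero_of_notMem_Icc hψ hX hv0 hvn hz

theorem contDiff_stepSum {k : WithTop ℕ∞} (hψ : ContDiff ℝ k ψ) :
    ContDiff ℝ k (stepSum ψ n X v) :=
  ContDiff.sum fun _ _ => contDiff_const.mul (hψ.comp (contDiff_id.sub contDiff_const))

theorem stepSum_eq_of_notMem_transitionZone (h₁ : IsTransition ψ₁ ε) (h₂ : IsTransition ψ₂ ε)
    (hz : z ∉ transitionZone n X ε) : stepSum ψ₁ n X v z = stepSum ψ₂ n X v z :=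
  Finset.sum_congr rfl fun j hj => by
    rw [h₁.eq_of_notMem_Ioo h₂ fun ht =>
      hz (mem_iUnion₂.2 ⟨j, hj, by linarith [ht.1], by linarith [ht.2]⟩)]

theorem abs_stepSum_sub_stepSum_le (h₁ : IsTransition ψ₁ ε) (h₂ : IsTransition ψ₂ ε)
    (hv : ∀ j ≤ n, |v (j + 1) - v j| ≤ δ) (z : ℝ) :
    |stepSum ψ₁ n X v z - stepSum ψ₂ n X v z|
      ≤ (transitionZone n X ε).indicator (fun _ => (n + 1) * δ) z := by
  by_cases hz : z ∈ transitionZone n X ε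
  · rw [indicator_of_mem hz, stepSum, stepSum, ← Finset.sum_sub_distrib]
    calc _ ≤ ∑ j ∈ Finset.range (n + 1),
          |(v (j + 1) - v j) * ψ₁ (z - X j) - (v (j + 1) - v j) * ψ₂ (z - X j)| :=
          Finset.abs_sum_le_sum_abs _ _
      _ ≤ ∑ j ∈ Finset.range (n + 1), δ := Finset.sum_le_sum fun j hj => by
          rw [← mul_sub, abs_mul]
          exact (mul_le_of_le_one_right (abs_nonneg _) (h₁.abs_sub_le_one h₂ _ _)).trans
            (hv j (Finset.mem_range_succ_iff.1 hj))
      _ = (n + 1) * δ := by simp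
  · rw [indicator_of_notMem hz, stepSum_eq_of_notMem_transitionZone h₁ h₂ hz, sub_self, abs_zero]

theorem abs_stepSum_sub_le_of_add_le (hψ : IsTransition ψ ε)
    (hgap : ∀ i j, i < j → j ≤ n → X i + g ≤ X j) (hv : ∀ j ≤ n, |v (j + 1) - v j| ≤ δ)
    {x y : ℝ} (hxy : |y - x| + ε ≤ g) :
    |stepSum ψ n X v y - stepSum ψ n X v x| ≤ δ := by
  wlog hle : x ≤ y generalizing x y
  · rw [abs_sub_comm]; exact this (by rwa [abs_sub_comm]) (le_of_not_ge hle)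
  rw [abs_of_nonneg (sub_nonneg.2 hle)] at hxy
  classical
  set f : ℕ → ℝ := fun j => (v (j + 1) - v j) * (ψ (y - X j) - ψ (x - X j))
  set active := (Finset.range (n + 1)).filter fun j => 0 < y - X j ∧ x - X j < ε
  have hsum : stepSum ψ n X v y - stepSum ψ n X v x = ∑ j ∈ active, f j := by
    rw [Finset.sum_filter_of_ne, stepSum, stepSum, ← Finset.sum_sub_distrib]
    · simp only [f, mul_sub]
    intro j _ hj
    by_contra hact
    exact hj (by
      simp only [f]
      rw [hψ.sub_eq_zero_of_le (by linarith) ((not_and_or.1 hact).imp not_lt.1 not_lt.1),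
        mul_zero])
  -- two active indices would be `g`-separated, while `y - x + ε ≤ g`
  have hcard : active.card ≤ 1 := Finset.card_le_one.2 fun a ha b hb => by
    simp only [active, Finset.mem_filter, Finset.mem_range] at ha hb
    by_contra hab
    rcases lt_or_gt_of_ne hab with h | h
    · linarith [hgap a b h (by omega)]
    · linarith [hgap b a h (by omega)]
  have hδ : 0 ≤ δ := (abs_nonneg _).trans (hv 0 (Nat.zero_le n))
  calc |stepSum ψ n X v y - stepSum ψ n X v x| ≤ ∑ j ∈ active, |f j| := by
        rw [hsum]; exact Finset.abs_sum_le_sum_abs _ _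
    _ ≤ active.card • δ := Finset.sum_le_card_nsmul _ _ _ fun j hj => by
        rw [abs_mul]
        exact (mul_le_of_le_one_right (abs_nonneg _) (hψ.abs_sub_le_one hψ _ _)).trans
          (hv j (Finset.mem_range_succ_iff.1 (Finset.mem_filter.1 hj).1))
    _ ≤ δ := by
        rw [nsmul_eq_mul]
        exact mul_le_of_le_one_left hδ (by exact_mod_cast hcard)

end StepSum

section Zone

variable {n : ℕ} {X : ℕ → ℝ} {ε : ℝ}

theorem measurableSet_transitionZone : MeasurableSet (transitionZone n X ε) :=
  Finset.measurableSet_biUnion _ fun _ _ => measurableSet_Ioo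

theorem volume_transitionZone_le : volume (transitionZone n X ε) ≤ (n + 1) * ENNReal.ofReal ε :=
  (measure_biUnion_finset_le _ _).trans_eq (by simp [Real.volume_Ioo])

theorem tendsto_volume_transitionZone :
    Tendsto (fun ε => volume (transitionZone n X ε)) (𝓝 0) (𝓝 0) := by
  have h : Tendsto (fun ε => ((n : ℝ≥0∞) + 1) * ENNReal.ofReal ε) (𝓝 0) (𝓝 0) := by
    simpa using ENNReal.Tendsto.const_mul (ENNReal.tendsto_ofReal (tendsto_id (x := 𝓝 (0 : ℝ))))
      (Or.inr (by simp))
  exact tendsto_of_tendsto_of_tendsto_of_le_of_le tendsto_const_nhds h (fun _ => bot_le)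
    fun _ => volume_transitionZone_le

theorem eLpNorm_stepSum_sub_stepSum_le {ψ₁ ψ₂ : ℝ → ℝ} {v : ℕ → ℝ} {δ : ℝ} {q : ℝ≥0∞}
    (h₁ : IsTransition ψ₁ ε) (h₂ : IsTransition ψ₂ ε) (hv : ∀ j ≤ n, |v (j + 1) - v j| ≤ δ)
    (hq₀ : q ≠ 0) (hq : q ≠ ∞) :
    eLpNorm (fun z => stepSum ψ₁ n X v z - stepSum ψ₂ n X v z) q volume
      ≤ ‖(n + 1) * δ‖ₑ * volume (transitionZone n X ε) ^ (1 / q.toReal) :=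
  (eLpNorm_mono_real fun z => (abs_stepSum_sub_stepSum_le h₁ h₂ hv z)).trans_eq
    (eLpNorm_indicator_const measurableSet_transitionZone hq₀ hq)

end Zone

def lambdaKernel (p δ t : ℝ) : ℝ≥0∞ := ENNReal.ofReal (δ ^ p / |t| ^ (1 + p))

def tailEnergy (p δ d : ℝ) : ℝ≥0∞ := ∫⁻ t in {t : ℝ | d ≤ |t|}, lambdaKernel p δ t

theorem measurable_lambdaKernel {p δ : ℝ} : Measurable (lambdaKernel p δ) := by
  unfold lambdaKernel; fun_prop

theorem tailEnergy_ne_top {p δ d : ℝ} (hp : 0 < p) (hδ : 0 ≤ δ) (hd : 0 < d) :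
    tailEnergy p δ d ≠ ∞ := by
  set C := δ ^ p * ((1 + d) / d) ^ (1 + p)
  -- on `d ≤ |t|` one has `1 + |t| ≤ (1 + d) / d * |t|`
  have hle : ∀ t ∈ {t : ℝ | d ≤ |t|},
      lambdaKernel p δ t ≤ ENNReal.ofReal C * ENNReal.ofReal ((1 + ‖t‖) ^ (-(1 + p))) := by
    intro t (ht : d ≤ |t|)
    have ht0 : 0 < |t| := hd.trans_le ht
    rw [lambdaKernel, ← ENNReal.ofReal_mul (by positivity)]
    refine ENNReal.ofReal_le_ofReal ?_
    rw [Real.norm_eq_abs, Real.rpow_neg (by positivity), mul_assoc, div_eq_mul_inv,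
      ← Real.inv_rpow ht0.le, ← Real.inv_rpow (by positivity), ← Real.mul_rpow (by positivity)
        (by positivity)]
    gcongr
    rw [← div_eq_mul_inv, div_div, inv_eq_one_div, div_le_div_iff₀ ht0 (by positivity)]
    nlinarith
  refine ne_of_lt ((setLIntegral_mono'
    (measurableSet_le measurable_const continuous_abs.measurable) hle).trans_lt ?_)
  rw [lintegral_const_mul _ (by fun_prop)]
  exact ENNReal.mul_lt_top ENNReal.ofReal_lt_top ((setLIntegral_le_lintegral _ _).trans_lt
    (finite_integral_one_add_norm (by simp [hp])))

section Slices

variable {G : Type*} [MeasurableSpace G] [AddGroup G] [MeasurableAdd₂ G] [MeasurableNeg G]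
  {μ : Measure G} [SFinite μ] {Z : Set G} {F : G → ℝ≥0∞}

theorem lintegral_prod_indicator_fst_mul_sub [μ.IsAddRightInvariant] (hZ : MeasurableSet Z)
    (hF : Measurable F) :
    ∫⁻ q, Z.indicator 1 q.1 * F (q.2 - q.1) ∂μ.prod μ = μ Z * ∫⁻ t, F t ∂μ := by
  rw [lintegral_prod _ (by fun_prop)]
  calc ∫⁻ x, ∫⁻ y, Z.indicator 1 x * F (y - x) ∂μ ∂μ
        = ∫⁻ x, Z.indicator 1 x * ∫⁻ t, F t ∂μ ∂μ :=
        lintegral_congr fun x => by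
          rw [lintegral_const_mul _ (by fun_prop), lintegral_sub_right_eq_self]
    _ = μ Z * ∫⁻ t, F t ∂μ := by
        rw [lintegral_mul_const _ (measurable_one.indicator hZ), lintegral_indicator_one hZ]

theorem lintegral_prod_indicator_snd_mul_sub [μ.IsAddLeftInvariant] [μ.IsNegInvariant]
    (hZ : MeasurableSet Z) (hF : Measurable F) :
    ∫⁻ q, Z.indicator 1 q.2 * F (q.2 - q.1) ∂μ.prod μ = μ Z * ∫⁻ t, F t ∂μ := by
  rw [lintegral_prod_symm _ (by fun_prop)]
  calc ∫⁻ y, ∫⁻ x, Z.indicator 1 y * F (y - x) ∂μ ∂μ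
        = ∫⁻ y, Z.indicator 1 y * ∫⁻ t, F t ∂μ ∂μ :=
        lintegral_congr fun y => by
          rw [lintegral_const_mul _ (by fun_prop), lintegral_sub_left_eq_self]
    _ = μ Z * ∫⁻ t, F t ∂μ := by
        rw [lintegral_mul_const _ (measurable_one.indicator hZ), lintegral_indicator_one hZ]

end Slices

section Energy

variable {p δ d : ℝ} {u w w' : ℝ → ℝ} {Z : Set ℝ}

theorem lambda1_univ (w : ℝ → ℝ) :
    Lambda1 p δ w univ
      = ∫⁻ q in {q : ℝ × ℝ | δ < |w q.2 - w q.1|}, lambdaKernel p δ (q.2 - q.1) := by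
  simp [Lambda1, lambdaKernel]

theorem lambda1_univ_congr_ae (h : u =ᵐ[volume] w) :
    Lambda1 p δ u univ = Lambda1 p δ w univ := by
  rw [lambda1_univ, lambda1_univ, Measure.volume_eq_prod]
  refine setLIntegral_congr ?_
  filter_upwards [Measure.quasiMeasurePreserving_fst.ae_eq_comp h,
    Measure.quasiMeasurePreserving_snd.ae_eq_comp h] with q h₁ h₂
  rw [Function.comp_apply, Function.comp_apply] at h₁ h₂
  change (δ < |u q.2 - u q.1|) = (δ < |w q.2 - w q.1|)
  rw [h₁, h₂]

theorem setLIntegral_lambdaKernel_le (hZ : MeasurableSet Z) :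
    ∫⁻ q in {q : ℝ × ℝ | (q.1 ∈ Z ∨ q.2 ∈ Z) ∧ d ≤ |q.2 - q.1|}, lambdaKernel p δ (q.2 - q.1)
      ≤ 2 * volume Z * tailEnergy p δ d := by
  set S := {t : ℝ | d ≤ |t|}
  have hS : MeasurableSet S := measurableSet_le measurable_const continuous_abs.measurable
  set F := S.indicator (lambdaKernel p δ)
  have hF : Measurable F := measurable_lambdaKernel.indicator hS
  have hB : MeasurableSet {q : ℝ × ℝ | (q.1 ∈ Z ∨ q.2 ∈ Z) ∧ d ≤ |q.2 - q.1|} :=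
    ((measurable_fst hZ).union (measurable_snd hZ)).inter
      (measurableSet_le measurable_const (continuous_snd.sub continuous_fst).abs.measurable)
  calc _ ≤ ∫⁻ q : ℝ × ℝ in {q : ℝ × ℝ | (q.1 ∈ Z ∨ q.2 ∈ Z) ∧ d ≤ |q.2 - q.1|},
        (Z.indicator 1 q.1 + Z.indicator 1 q.2) * F (q.2 - q.1) := by
        refine setLIntegral_mono' hB fun q ⟨hq, hd⟩ => ?_
        rw [show F (q.2 - q.1) = lambdaKernel p δ (q.2 - q.1) from
          indicator_of_mem (show q.2 - q.1 ∈ S from hd) _]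
        refine le_mul_of_one_le_left bot_le ?_
        rcases hq with h | h <;> simp [indicator_of_mem h]
    _ ≤ ∫⁻ q : ℝ × ℝ, (Z.indicator 1 q.1 + Z.indicator 1 q.2) * F (q.2 - q.1) :=
        setLIntegral_le_lintegral _ _
    _ = 2 * volume Z * tailEnergy p δ d := by
        rw [tailEnergy, ← lintegral_indicator hS, Measure.volume_eq_prod]
        simp_rw [add_mul]
        rw [lintegral_add_left (by fun_prop), lintegral_prod_indicator_fst_mul_sub hZ hF,
          lintegral_prod_indicator_snd_mul_sub hZ hF, two_mul, add_mul]

theorem lambda1_univ_le_add (hZ : MeasurableSet Z)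
    (hw : ∀ x y, |y - x| < d → |w y - w x| ≤ δ) (heq : EqOn w w' Zᶜ) :
    Lambda1 p δ w univ ≤ Lambda1 p δ w' univ + 2 * volume Z * tailEnergy p δ d := by
  rw [lambda1_univ, lambda1_univ]
  have hsub : {q : ℝ × ℝ | δ < |w q.2 - w q.1|} ⊆ {q : ℝ × ℝ | δ < |w' q.2 - w' q.1|}
      ∪ {q : ℝ × ℝ | (q.1 ∈ Z ∨ q.2 ∈ Z) ∧ d ≤ |q.2 - q.1|} := by
    rintro ⟨x, y⟩ (hq : δ < |w y - w x|)
    have hd : d ≤ |y - x| := not_lt.1 fun h => (hw x y h).not_gt hq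
    by_cases hZ : x ∈ Z ∨ y ∈ Z
    · exact Or.inr ⟨hZ, hd⟩
    · rw [not_or] at hZ
      left
      show δ < |w' y - w' x|
      rwa [← heq hZ.1, ← heq hZ.2]
  exact (lintegral_mono_set hsub).trans ((lintegral_union_le _ _ _).trans
    (add_le_add le_rfl (setLIntegral_lambdaKernel_le hZ)))

theorem lambda1_stepSum_le_add {ψ₁ ψ₂ : ℝ → ℝ} {n : ℕ} {X v : ℕ → ℝ} {ε g : ℝ}
    (h₁ : IsTransition ψ₁ ε) (h₂ : IsTransition ψ₂ ε)
    (hgap : ∀ i j, i < j → j ≤ n → X i + g ≤ X j) (hv : ∀ j ≤ n, |v (j + 1) - v j| ≤ δ)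
    (hεg : ε ≤ g / 2) :
    Lambda1 p δ (stepSum ψ₁ n X v) univ
      ≤ Lambda1 p δ (stepSum ψ₂ n X v) univ
        + 2 * volume (transitionZone n X ε) * tailEnergy p δ (g / 2) :=
  lambda1_univ_le_add measurableSet_transitionZone
    (fun _ _ hxy => abs_stepSum_sub_le_of_add_le h₁ hgap hv (by linarith))
    fun _ hz => stepSum_eq_of_notMem_transitionZone h₁ h₂ hz

end Energy

theorem StrictMonoOn.exists_pos_add_le {n : ℕ} {X : ℕ → ℝ} (hX : StrictMonoOn X (Iic n)) :
    ∃ g > 0, ∀ i j, i < j → j ≤ n → X i + g ≤ X j := by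
  have hev : ∀ᶠ g in 𝓝[>] (0 : ℝ), ∀ ij ∈ Finset.range (n + 1) ×ˢ Finset.range (n + 1),
      ij.1 < ij.2 → X ij.1 + g ≤ X ij.2 := by
    refine (eventually_all_finset _).2 fun ij hij => ?_
    rw [Finset.mem_product, Finset.mem_range, Finset.mem_range] at hij
    by_cases hlt : ij.1 < ij.2
    · have hpos : 0 < X ij.2 - X ij.1 :=
        sub_pos.2 (hX (mem_Iic.2 (by omega)) (mem_Iic.2 (by omega)) hlt)
      filter_upwards [nhdsWithin_le_nhds (Iio_mem_nhds hpos)] with g hg _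
      linarith [mem_Iio.1 hg]
    · exact Eventually.of_forall fun _ h => absurd h hlt
  obtain ⟨g, hg, hg0⟩ := (hev.and self_mem_nhdsWithin).exists
  exact ⟨g, hg0, fun i j hij hj => hg (i, j)
    (Finset.mem_product.2 ⟨Finset.mem_range.2 (by omega), Finset.mem_range.2 (by omega)⟩) hij⟩

theorem exists_mem_Ioo_of_notMem_image {n : ℕ} {X : ℕ → ℝ} {z : ℝ} (hz : z ∈ Icc (X 0) (X n))
    (hzX : z ∉ X '' Iic n) : ∃ i, 1 ≤ i ∧ i ≤ n ∧ z ∈ Ioo (X (i - 1)) (X i) := by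
  have hne : ∀ i ≤ n, z ≠ X i := fun i hi h => hzX ⟨i, hi, h.symm⟩
  have hex : ∃ i, z < X i := ⟨n, lt_of_le_of_ne hz.2 (hne n le_rfl)⟩
  classical
  have hfind_le : Nat.find hex ≤ n := Nat.find_min' hex (lt_of_le_of_ne hz.2 (hne n le_rfl))
  have hfind_pos : 1 ≤ Nat.find hex :=
    Nat.one_le_iff_ne_zero.2 fun h => not_lt.2 hz.1 (h ▸ Nat.find_spec hex)
  exact ⟨Nat.find hex, hfind_pos, hfind_le,
    lt_of_le_of_ne (not_lt.1 (Nat.find_min hex (by omega))) (hne _ (by omega)).symm,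
    Nat.find_spec hex⟩

section StepFunction

variable {u : ℝ → ℝ} {n : ℕ} {X v : ℕ → ℝ} {z : ℝ}

theorem stepSum_heaviside_of_mem_Ioo (hX : MonotoneOn X (Iic n)) {i : ℕ} (hi : 1 ≤ i)
    (hin : i ≤ n) (hz : z ∈ Ioo (X (i - 1)) (X i)) : stepSum heaviside n X v z = v i - v 0 :=
  stepSum_eq_sub (by omega)
    (fun j hj => (isTransition_heaviside (ε := z - X j) (by
      linarith [hX (mem_Iic.2 (by omega : j ≤ n)) (mem_Iic.2 (by omega : i - 1 ≤ n))
        (by omega : j ≤ i - 1), hz.1])).eq_one_of_le _ le_rfl)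
    fun j hij hj => (isTransition_heaviside one_pos).eq_zero_of_nonpos _ (by
      linarith [hX (mem_Iic.2 hin) (mem_Iic.2 hj) hij, hz.2])

theorem eq_stepSum_heaviside_of_notMem (hX : MonotoneOn X (Iic n)) (hv0 : v 0 = 0)
    (hvn : v (n + 1) = 0) (hu0 : ∀ y, y < X 0 → u y = 0) (hun : ∀ y, X n < y → u y = 0)
    (huv : ∀ i, 1 ≤ i → i ≤ n → ∀ y, X (i - 1) < y → y < X i → u y = v i)
    (hzX : z ∉ X '' Iic n) : u z = stepSum heaviside n X v z := by
  by_cases hz : z ∈ Icc (X 0) (X n)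
  · obtain ⟨i, hi, hin, hzi⟩ := exists_mem_Ioo_of_notMem_image hz hzX
    rw [stepSum_heaviside_of_mem_Ioo hX hi hin hzi, hv0, sub_zero, huv i hi hin z hzi.1 hzi.2]
  · rcases not_and_or.1 hz with h | h <;> rw [not_le] at h
    · rw [hu0 z h, stepSum_eq_zero_of_notMem_Icc (isTransition_heaviside one_pos) hX hv0 hvn
        fun h' => h.not_ge h'.1]
    · rw [hun z h, stepSum_eq_zero_of_notMem_Icc
        (isTransition_heaviside (half_pos (sub_pos.2 h))) hX hv0 hvn fun h' => by linarith [h'.2]]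

theorem IsDeltaStep.exists_ae_eq_stepSum {δ : ℝ} (hδ : 0 < δ) (hu : IsDeltaStep δ u) :
    ∃ (n : ℕ) (X v : ℕ → ℝ), StrictMonoOn X (Iic n) ∧ v 0 = 0 ∧ v (n + 1) = 0 ∧
      (∀ j ≤ n, |v (j + 1) - v j| ≤ δ) ∧ u =ᵐ[volume] stepSum heaviside n X v := by
  obtain ⟨n, X, kk, hn, hX, hu0, hun, huk, hk1, hkn, hkk⟩ := hu
  classical
  set v : ℕ → ℝ := fun i => if 1 ≤ i ∧ i ≤ n then (kk i : ℝ) * δ else 0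
  have hXmono : StrictMonoOn X (Iic n) := strictMonoOn_Iic_of_lt_succ hX
  have hunit : ∀ k : ℤ, |k| = 1 → |(k : ℝ) * δ| ≤ δ := fun k hk => by
    rw [abs_mul, ← Int.cast_abs, hk, Int.cast_one, one_mul, abs_of_pos hδ]
  refine ⟨n, X, v, hXmono, by simp [v], by simp [v], fun j hj => ?_, ?_⟩
  · rcases Nat.eq_zero_or_pos j with rfl | hj0
    · simpa [v, Nat.one_le_iff_ne_zero.2 hn.ne'] using hunit _ hk1
    rcases hj.lt_or_eq with hjn | rfl
    · convert hunit _ (hkk (j + 1) (by omega) (by omega)) using 2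
      simp [v, show 1 ≤ j + 1 ∧ j + 1 ≤ n by omega, show 1 ≤ j ∧ j ≤ n by omega, sub_mul]
    · convert hunit _ hkn using 1
      simp [v, show 1 ≤ j ∧ j ≤ j by omega, abs_mul]
  · have hnull : volume (X '' Iic n) = 0 := ((finite_Iic n).image X).measure_zero volume
    filter_upwards [measure_eq_zero_iff_ae_notMem.1 hnull] with z hz
    refine eq_stepSum_heaviside_of_notMem hXmono.monotoneOn (by simp [v]) (by simp [v]) hu0 hun
      (fun i hi hin y hy₁ hy₂ => ?_) hz
    rw [huk i hi hin y hy₁ hy₂]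
    exact (if_pos ⟨hi, hin⟩).symm

end StepFunction

theorem ENNReal.tendsto_of_le_add_of_le_add {α : Type*} {l : Filter α} {f c : α → ℝ≥0∞}
    {a : ℝ≥0∞} (hc : Tendsto c l (𝓝 0)) (h₁ : ∀ᶠ x in l, a ≤ f x + c x)
    (h₂ : ∀ᶠ x in l, f x ≤ a + c x) : Tendsto f l (𝓝 a) :=
  tendsto_of_tendsto_of_tendsto_of_le_of_le'
    (by simpa using ENNReal.Tendsto.sub tendsto_const_nhds hc (Or.inr ENNReal.zero_ne_top))
    (by simpa using tendsto_const_nhds.add hc) (h₁.mono fun _ hx => tsub_le_iff_right.2 hx) h₂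

/-- **Smooth approximation of `δ`-step functions** (Proposition 3.9): every `δ`-step function
`u` admits a family of `C^∞` functions with compact support converging to `u` in `L^p(ℝ)`
whose energies `Λ_{δ,p}` converge to `Λ_{δ,p}(u,ℝ)`. -/
theorem smooth_approximation_delta_step (δ p : ℝ) (hδ : 0 < δ) (hp : 1 ≤ p)
    (u : ℝ → ℝ) (hu : IsDeltaStep δ u) :
    ∃ uε : ℝ → ℝ → ℝ,
      (∀ ε, 0 < ε → ContDiff ℝ (⊤ : ℕ∞) (uε ε) ∧ HasCompactSupport (uε ε)) ∧
      Tendsto (fun ε => eLpNorm (fun x => uε ε x - u x) (ENNReal.ofReal p) volume)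
        (𝓝[>] (0 : ℝ)) (𝓝 0) ∧
      Tendsto (fun ε => Lambda1 p δ (uε ε) univ) (𝓝[>] (0 : ℝ))
        (𝓝 (Lambda1 p δ u univ)) := by
  obtain ⟨n, X, v, hX, hv0, hvn, hv, hu⟩ := hu.exists_ae_eq_stepSum hδ
  obtain ⟨g, hg, hgap⟩ := hX.exists_pos_add_le
  have hp₀ : 0 < p := by linarith
  have hzone : Tendsto (fun ε => volume (transitionZone n X ε)) (𝓝[>] 0) (𝓝 0) :=
    tendsto_volume_transitionZone.mono_left nhdsWithin_le_nhds
  refine ⟨fun ε => stepSum (fun t => Real.smoothTransition (t / ε)) n X v, fun ε hε =>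
    ⟨contDiff_stepSum (Real.smoothTransition.contDiff.comp (contDiff_id.div_const ε)),
      hasCompactSupport_stepSum (isTransition_smoothTransition hε) hX.monotoneOn hv0 hvn⟩, ?_, ?_⟩
  · refine tendsto_of_tendsto_of_tendsto_of_le_of_le' tendsto_const_nhds
      ((ENNReal.tendsto_const_mul_rpow_nhds_zero_of_pos (enorm_ne_top (x := ((n : ℝ) + 1) * δ))
        (one_div_pos.2 hp₀)).comp hzone) (Eventually.of_forall fun _ => bot_le) ?_
    filter_upwards [self_mem_nhdsWithin] with ε (hε : 0 < ε)
    refine (eLpNorm_congr_ae (EventuallyEq.rfl.sub hu)).trans_le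
      ((eLpNorm_stepSum_sub_stepSum_le (isTransition_smoothTransition hε)
        (isTransition_heaviside hε) hv (by simpa using hp₀) ENNReal.ofReal_ne_top).trans_eq ?_)
    rw [ENNReal.toReal_ofReal hp₀.le, Function.comp_apply]
  · rw [lambda1_univ_congr_ae hu]
    have hc : Tendsto (fun ε => 2 * volume (transitionZone n X ε) * tailEnergy p δ (g / 2))
        (𝓝[>] 0) (𝓝 0) := by
      simpa using ENNReal.Tendsto.mul_const (ENNReal.Tendsto.const_mul hzone
        (Or.inr ENNReal.ofNat_ne_top)) (Or.inr (tailEnergy_ne_top hp₀ hδ.le (half_pos hg)))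
    refine ENNReal.tendsto_of_le_add_of_le_add hc ?_ ?_ <;>
      filter_upwards [Ioo_mem_nhdsGT (half_pos hg)] with ε ⟨hε, hεg⟩
    · exact lambda1_stepSum_le_add (isTransition_heaviside hε)
        (isTransition_smoothTransition hε) hgap hv hεg.le
    · exact lambda1_stepSum_le_add (isTransition_smoothTransition hε)
        (isTransition_heaviside hε) hgap hv hεg.le
end
end

section
/- Let p ≥ 1 and δ > 0 be real numbers, and let u : ℝ → ℝ be a Lipschitz continuous function with Lipschitz constant L. Then for every x ∈ ℝ it holds that ∫_{J(δ,u,x)} δ^p/|y−x|^{1+p} dy ≤ (2/p)·L^p, where J(δ,u,x) := {y ∈ ℝ : |S_δu(y) − S_δu(x)| > δ} and S_δu is the vertical δ-segmentation of u. -/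
open MeasureTheory Filter Topology Set
open scoped ENNReal NNReal

noncomputable section

/-- The vertical `δ`-segmentation `S_δ u (x) = δ·⌊u(x)/δ⌋`. -/
def Sdelta (δ : ℝ) (u : ℝ → ℝ) (x : ℝ) : ℝ := δ * ⌊u x / δ⌋

/-! Values of `S_δu` lie in `δℤ` and within `δ` below `u`, so a jump of `S_δu` larger than `δ` is
at least `2δ` and forces `|u y - u x| > δ`, hence `|y - x| > δ / L`. The integral is therefore
bounded by the integral of `δ^p / |y - x|^(1+p)` outside the ball of radius `δ / L` around `x`,
which equals `2 δ^p (δ / L)^(-p) / p = 2 L^p / p`. -/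

namespace Sdelta

variable {δ : ℝ} {u : ℝ → ℝ}

theorem le_self (hδ : 0 < δ) (x : ℝ) : Sdelta δ u x ≤ u x := by
  have := Int.sub_floor_div_mul_nonneg (u x) hδ
  rw [Sdelta]; linarith

theorem self_lt_add (hδ : 0 < δ) (x : ℝ) : u x < Sdelta δ u x + δ := by
  have := Int.sub_floor_div_mul_lt (u x) hδ
  rw [Sdelta]; linarith

theorem two_mul_le_abs_sub (hδ : 0 < δ) {x y : ℝ} (h : δ < |Sdelta δ u y - Sdelta δ u x|) :
    2 * δ ≤ |Sdelta δ u y - Sdelta δ u x| := by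
  set k : ℤ := ⌊u y / δ⌋ - ⌊u x / δ⌋
  have hk : |Sdelta δ u y - Sdelta δ u x| = δ * |(k : ℝ)| := by
    rw [Sdelta, Sdelta, ← mul_sub, abs_mul, abs_of_pos hδ]
    push_cast [k]; rfl
  rw [hk] at h ⊢
  have h1 : (1 : ℤ) < |k| := by exact_mod_cast (lt_mul_iff_one_lt_right hδ).mp h
  have h2 : (2 : ℝ) ≤ |(k : ℝ)| := by exact_mod_cast h1
  nlinarith

theorem lt_abs_sub_of_lt_abs_sub (hδ : 0 < δ) {x y : ℝ}
    (h : δ < |Sdelta δ u y - Sdelta δ u x|) : δ < |u y - u x| := by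
  have h2 := two_mul_le_abs_sub hδ h
  have hy := le_self (u := u) hδ y
  have hy' := self_lt_add (u := u) hδ y
  have hx := le_self (u := u) hδ x
  have hx' := self_lt_add (u := u) hδ x
  have hclose : |(Sdelta δ u y - Sdelta δ u x) - (u y - u x)| < δ := by
    rw [abs_lt]; constructor <;> linarith
  linarith [abs_sub_abs_le_abs_sub (Sdelta δ u y - Sdelta δ u x) (u y - u x)]

end Sdelta

theorem setLIntegral_lt_abs_sub (f : ℝ → ℝ≥0∞) {c : ℝ} (hc : 0 ≤ c) (x : ℝ) :
    ∫⁻ y in {y | c < |y - x|}, f |y - x| = 2 * ∫⁻ t in Ioi c, f t := by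
  have hsplit : {y | c < |y - x|} = Iio (x - c) ∪ Ioi (x + c) := by
    ext y
    simp only [mem_ofPred_eq, mem_union, mem_Iio, mem_Ioi, lt_abs]
    constructor <;> rintro (h | h) <;> first | (left; linarith) | (right; linarith)
  have hdisj : Disjoint (Iio (x - c)) (Ioi (x + c)) :=
    (Iic_disjoint_Ioi (by linarith)).mono_left Iio_subset_Iic_self
  rw [hsplit, lintegral_union measurableSet_Ioi hdisj, two_mul]
  congr 1
  · have hrefl : MeasurePreserving (fun t : ℝ => x - t) volume volume :=
      (measurePreserving_add_left volume x).comp (Measure.measurePreserving_neg volume)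
    have hpre : (fun t : ℝ => x - t) ⁻¹' Iio (x - c) = Ioi c := by ext t; simp
    rw [← hrefl.setLIntegral_comp_preimage_emb (Homeomorph.subLeft x).measurableEmbedding, hpre]
    refine setLIntegral_congr_fun measurableSet_Ioi fun t ht => ?_
    rw [sub_sub_cancel_left, abs_neg, abs_of_pos (hc.trans_lt ht)]
  · have htrans := measurePreserving_add_right (volume : Measure ℝ) x
    have hpre : (fun t : ℝ => t + x) ⁻¹' Ioi (x + c) = Ioi c := by ext t; simp [add_comm]
    rw [← htrans.setLIntegral_comp_preimage_emb (Homeomorph.addRight x).measurableEmbedding, hpre]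
    refine setLIntegral_congr_fun measurableSet_Ioi fun t ht => ?_
    rw [add_sub_cancel_right, abs_of_pos (hc.trans_lt ht)]

theorem setLIntegral_Ioi_div_rpow {a p c : ℝ} (ha : 0 ≤ a) (hp : 0 < p) (hc : 0 < c) :
    ∫⁻ t in Ioi c, ENNReal.ofReal (a / t ^ (1 + p)) = ENNReal.ofReal (a * c ^ (-p) / p) := by
  have hexp : -(1 + p) < -1 := by linarith
  have hrpow : EqOn (fun t : ℝ => a * t ^ (-(1 + p))) (fun t => a / t ^ (1 + p)) (Ioi c) :=
    fun t ht => by simp only [Real.rpow_neg (hc.trans ht).le, div_eq_mul_inv]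
  have hint : IntegrableOn (fun t : ℝ => a / t ^ (1 + p)) (Ioi c) :=
    IntegrableOn.congr_fun ((integrableOn_Ioi_rpow_of_lt hexp hc).const_mul a) hrpow
      measurableSet_Ioi
  have hnonneg : 0 ≤ᵐ[volume.restrict (Ioi c)] fun t : ℝ => a / t ^ (1 + p) := by
    filter_upwards [ae_restrict_mem measurableSet_Ioi] with t ht
    have := hc.trans ht
    positivity
  rw [← ofReal_integral_eq_lintegral_ofReal hint hnonneg,
    ← setIntegral_congr_fun measurableSet_Ioi hrpow, integral_const_mul,
    integral_Ioi_rpow_of_lt hexp hc, show -(1 + p) + 1 = -p by ring]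
  congr 1
  field_simp

theorem pointwise_hostility_bound_general (p δ : ℝ) (hp : 1 ≤ p) (hδ : 0 < δ)
    (u : ℝ → ℝ) (L : ℝ)
    (hlip : ∀ x y : ℝ, |u y - u x| ≤ L * |y - x|)
    (x : ℝ) :
    ∫⁻ y in {y : ℝ | δ < |Sdelta δ u y - Sdelta δ u x|},
        ENNReal.ofReal (δ ^ p / |y - x| ^ (1 + p))
      ≤ ENNReal.ofReal (2 / p * L ^ p) := by
  have hsub : {y : ℝ | δ < |Sdelta δ u y - Sdelta δ u x|} ⊆ {y | δ < L * |y - x|} :=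
    fun y hy => (Sdelta.lt_abs_sub_of_lt_abs_sub hδ hy).trans_le (hlip x y)
  rcases le_or_gt L 0 with hL | hL
  · have hJ : {y : ℝ | δ < |Sdelta δ u y - Sdelta δ u x|} = ∅ :=
      subset_empty_iff.mp fun y hy =>
        (mul_nonpos_of_nonpos_of_nonneg hL (abs_nonneg _)).not_gt (hδ.trans (hsub hy))
    simp [hJ]
  have hset : {y : ℝ | δ < L * |y - x|} = {y | δ / L < |y - x|} := by
    ext y; simp only [mem_ofPred_eq, div_lt_iff₀ hL, mul_comm L]
  have hp0 : 0 < p := by linarith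
  have hc : 0 < δ / L := div_pos hδ hL
  calc _ ≤ ∫⁻ y in {y : ℝ | δ / L < |y - x|}, ENNReal.ofReal (δ ^ p / |y - x| ^ (1 + p)) :=
        lintegral_mono_set (hset ▸ hsub)
    _ = 2 * ENNReal.ofReal (δ ^ p * (δ / L) ^ (-p) / p) := by
        rw [setLIntegral_lt_abs_sub (fun t ↦ ENNReal.ofReal (δ ^ p / t ^ (1 + p))) hc.le,
          setLIntegral_Ioi_div_rpow (by positivity) hp0 hc]
    _ = ENNReal.ofReal (2 / p * L ^ p) := by
        rw [← ENNReal.ofReal_ofNat 2, ← ENNReal.ofReal_mul zero_le_two,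
          Real.rpow_neg hc.le, Real.div_rpow hδ.le hL.le]
        congr 1
        field_simp

/-- **Uniform bound on the pointwise hostility function** (inequality (3.12)): if `u` is
Lipschitz with constant `L`, then for every `x`,
`∫_{J(δ,u,x)} δ^p/|y−x|^{1+p} dy ≤ (2/p)·L^p`, where
`J(δ,u,x) = {y : |S_δu(y) − S_δu(x)| > δ}`. -/
theorem pointwise_hostility_bound (p δ : ℝ) (hp : 1 ≤ p) (hδ : 0 < δ)
    (u : ℝ → ℝ) (L : ℝ) (hL : 0 ≤ L)
    (hlip : ∀ x y : ℝ, |u y - u x| ≤ L * |y - x|)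
    (x : ℝ) :
    ∫⁻ y in {y : ℝ | δ < |Sdelta δ u y - Sdelta δ u x|},
        ENNReal.ofReal (δ ^ p / |y - x| ^ (1 + p))
      ≤ ENNReal.ofReal (2 / p * L ^ p) :=
  pointwise_hostility_bound_general p δ hp hδ u L hlip x
end
end
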